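/- arXiv:0902.0877 — 4 statements merged into one kernel-verified Lean document; each statement's English description precedes it below -/
import Mathlib

section
/- The function f(x,y) = (2 + 1/x + 2(y/x) + (y/x)²)·exp(−y/x) is a first integral of the 1-form ω₂ = x²dx + (x+y²)(x dy − y dx) on the open set x ≠ 0; that is, df ∧ ω₂ = 0. -/
/-!
Writing `ω₂ = P dx + Q dy` with `P = x² - (x + y²) y` and `Q = (x + y²) x`, a direct computation
gives `df = -(exp (-y/x) / x⁴) · ω₂`: the function `exp (-y/x) / x⁴` is an integrating factor
of `ω₂`. Hence `∂f/∂x = -μ P` and `∂f/∂y = -μ Q` for the same `μ`, and `P ∂f/∂y - Q ∂f/∂x`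
vanishes identically.
-/

open Complex

noncomputable def omega2FirstIntegral (x y : ℂ) : ℂ :=
  (2 + 1/x + 2*(y/x) + (y/x)^2) * exp (-(y/x))

theorem hasDerivAt_omega2FirstIntegral_snd {x : ℂ} (hx : x ≠ 0) (y : ℂ) :
    HasDerivAt (omega2FirstIntegral x) (-(exp (-(y/x)) / x^4) * ((x + y^2) * x)) y := by
  have ht : HasDerivAt (fun y' : ℂ => y'/x) (1/x) y := (hasDerivAt_id y).div_const x
  refine ((((ht.const_mul 2).const_add (2 + 1/x)).fun_add (ht.fun_pow 2)).fun_mul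
    ht.fun_neg.cexp).congr_deriv ?_
  simp only [Nat.cast_ofNat, Nat.add_one_sub_one, pow_one]
  field_simp
  ring

theorem hasDerivAt_omega2FirstIntegral_fst {x : ℂ} (hx : x ≠ 0) (y : ℂ) :
    HasDerivAt (fun x' => omega2FirstIntegral x' y)
      (-(exp (-(y/x)) / x^4) * (x^2 - (x + y^2) * y)) x := by
  have hs : HasDerivAt (fun x' : ℂ => 1/x') (-(1/x^2)) x := by
    simpa [one_div] using hasDerivAt_inv hx
  have ht : HasDerivAt (fun x' : ℂ => y/x') (y * -(1/x^2)) x := by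
    simpa [div_eq_mul_inv] using hs.const_mul y
  refine ((((hs.const_add 2).fun_add (ht.const_mul 2)).fun_add (ht.fun_pow 2)).fun_mul
    ht.fun_neg.cexp).congr_deriv ?_
  simp only [Nat.cast_ofNat, Nat.add_one_sub_one, pow_one]
  field_simp
  ring

/-- f(x,y) = (2 + 1/x + 2(y/x) + (y/x)²)·exp(−y/x) is a first integral of
ω₂ = x²dx + (x+y²)(x dy − y dx) = (x² − (x+y²)y)dx + (x+y²)x dy on x ≠ 0. -/
theorem first_integral_omega2 :
    ∀ x y : ℂ, x ≠ 0 →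
      (x^2 - (x + y^2) * y) *
          deriv (fun y' : ℂ => (2 + 1/x + 2*(y'/x) + (y'/x)^2) * Complex.exp (-(y'/x))) y
        - ((x + y^2) * x) *
          deriv (fun x' : ℂ => (2 + 1/x' + 2*(y/x') + (y/x')^2) * Complex.exp (-(y/x'))) x
        = 0 := by
  intro x y hx
  change _ * deriv (omega2FirstIntegral x) y - _ * deriv (fun x' => omega2FirstIntegral x' y) x = 0
  rw [(hasDerivAt_omega2FirstIntegral_snd hx y).deriv,
    (hasDerivAt_omega2FirstIntegral_fst hx y).deriv]
  ring
end

section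
/- The function f(x,y) = (y/x)·exp((1/2)(y/x)² − 1/x) is a first integral of the 1-form ω₃ = xy dx + (x²+y²)(x dy − y dx) on the open set x ≠ 0. -/
/-!
The factor `μ = exp (½ (y/x)² - 1/x) / x⁴` is an integrating factor of `ω₃ = P dx + Q dy`:
`∂f/∂x = μ P` and `∂f/∂y = μ Q`, i.e. `df = μ ω₃`. Hence `P ∂f/∂y - Q ∂f/∂x = μ (P Q - Q P) = 0`.
-/

open Complex

noncomputable abbrev omega3FirstIntegral (x y : ℂ) : ℂ :=
  y / x * exp (1 / 2 * (y / x) ^ 2 - 1 / x)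

theorem hasDerivAt_omega3FirstIntegral_snd {x : ℂ} (y : ℂ) (hx : x ≠ 0) :
    HasDerivAt (omega3FirstIntegral x)
      (exp (1 / 2 * (y / x) ^ 2 - 1 / x) / x ^ 4 * ((x ^ 2 + y ^ 2) * x)) y := by
  have hu : HasDerivAt (fun y' : ℂ => y' / x) (1 / x) y := by
    simpa using (hasDerivAt_id y).div_const x
  refine (hu.mul (((hu.fun_pow 2).const_mul (1 / 2)).sub_const (1 / x)).cexp).congr_deriv ?_
  push_cast
  field_simp

theorem hasDerivAt_omega3FirstIntegral_fst {x : ℂ} (y : ℂ) (hx : x ≠ 0) :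
    HasDerivAt (fun x' => omega3FirstIntegral x' y)
      (exp (1 / 2 * (y / x) ^ 2 - 1 / x) / x ^ 4 * (x * y - (x ^ 2 + y ^ 2) * y)) x := by
  have hu : HasDerivAt (fun x' : ℂ => y / x') (-y / x ^ 2) x := by
    simpa [div_eq_mul_inv] using (hasDerivAt_inv hx).const_mul y
  have hv : HasDerivAt (fun x' : ℂ => 1 / x') (-1 / x ^ 2) x := by
    simpa [one_div, neg_div] using hasDerivAt_inv hx
  refine (hu.mul (((hu.fun_pow 2).const_mul (1 / 2)).fun_sub hv).cexp).congr_deriv ?_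
  push_cast
  field_simp
  ring

/-- f(x,y) = (y/x)·exp((1/2)(y/x)² − 1/x) is a first integral of
ω₃ = xy dx + (x²+y²)(x dy − y dx) = (xy − (x²+y²)y)dx + (x²+y²)x dy on x ≠ 0. -/
theorem first_integral_omega3 :
    ∀ x y : ℂ, x ≠ 0 →
      (x*y - (x^2 + y^2) * y) *
          deriv (fun y' : ℂ => (y'/x) * Complex.exp ((1/2) * (y'/x)^2 - 1/x)) y
        - ((x^2 + y^2) * x) *
          deriv (fun x' : ℂ => (y/x') * Complex.exp ((1/2) * (y/x')^2 - 1/x')) x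
        = 0 := by
  intro x y hx
  rw [(hasDerivAt_omega3FirstIntegral_snd y hx).deriv,
    (hasDerivAt_omega3FirstIntegral_fst y hx).deriv]
  ring
end

section
/- The 1-form ω₄ = x(x+y²) dx + (x + y² − x²y) dy admits no invariant line in ℂ²: there is no affine line L = {ax + by + c = 0} with (a,b) ≠ (0,0) such that ω₄ ∧ d(ax+by+c) vanishes identically on L (equivalently, such that aQ − bP is divisible by ax+by+c, where P = x(x+y²), Q = x+y²−x²y). -/
open MvPolynomial

/-!
On a vertical line `x = x₀` the form restricts to `Q(x₀, y) = x₀ + y² − x₀² y`, which is not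
identically zero. On a line `y = m x + k` the invariance condition is `P + m Q = 0` along the line;
there the cubic terms cancel, and what is left is a quadratic in `x` whose coefficients
`1 + m k + m³`, `k² + m + 2 m² k`, `m k²` cannot vanish simultaneously.
-/

section

variable {K : Type*}

def omega4P [CommRing K] (x y : K) : K := x * (x + y ^ 2)

def omega4Q [CommRing K] (x y : K) : K := x + y ^ 2 - x ^ 2 * y

theorem quadratic_coeffs_eq_zero_of_forall_eq_zero [CommRing K] [IsDomain K] [Infinite K]
    {a b c : K} (h : ∀ x, a * x ^ 2 + b * x + c = 0) : a = 0 ∧ b = 0 ∧ c = 0 := by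
  have hp : (Polynomial.C a * .X ^ 2 + .C b * .X + .C c : Polynomial K) = 0 :=
    Polynomial.funext fun x => by simpa using h x
  refine ⟨?_, ?_, ?_⟩
  · simpa using congrArg (Polynomial.coeff · 2) hp
  · simpa using congrArg (Polynomial.coeff · 1) hp
  · simpa using congrArg (Polynomial.coeff · 0) hp

theorem exists_omega4Q_ne_zero [CommRing K] [Nontrivial K] (x₀ : K) :
    ∃ y, omega4Q x₀ y ≠ 0 := by
  by_contra! h
  have hx₀ : x₀ = 0 := by simpa [omega4Q] using h 0
  simpa [omega4Q, hx₀] using h 1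

theorem omega4P_add_mul_omega4Q_on_line [CommRing K] (m k x : K) :
    omega4P x (m * x + k) + m * omega4Q x (m * x + k)
      = (1 + m * k + m ^ 3) * x ^ 2 + (k ^ 2 + m + 2 * m ^ 2 * k) * x + m * k ^ 2 := by
  unfold omega4P omega4Q
  ring

theorem exists_omega4P_add_mul_omega4Q_ne_zero [CommRing K] [IsDomain K] [Infinite K]
    (m k : K) : ∃ x, omega4P x (m * x + k) + m * omega4Q x (m * x + k) ≠ 0 := by
  by_contra! h
  simp only [omega4P_add_mul_omega4Q_on_line] at h
  obtain ⟨h₂, h₁, h₀⟩ := quadratic_coeffs_eq_zero_of_forall_eq_zero h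
  have hmk : m = 0 ∧ k = 0 := by
    rcases mul_eq_zero.mp h₀ with hm | hk
    · subst hm
      exact ⟨rfl, by simpa using h₁⟩
    · obtain rfl : k = 0 := pow_eq_zero_iff two_ne_zero |>.mp hk
      exact ⟨by simpa using h₁, rfl⟩
  obtain ⟨rfl, rfl⟩ := hmk
  simp at h₂

end

/-- ω₄ = P dx + Q dy with P = x(x+y²), Q = x+y²−x²y admits no invariant affine
line: there are no a, b, c with (a,b) ≠ (0,0) such that ℓ = ax+by+c divides
X(ℓ) = a·Q − b·P (where X = Q ∂/∂x − P ∂/∂y). -/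
theorem omega4_no_invariant_line :
    ¬ ∃ a b c : ℂ, (a, b) ≠ (0, 0) ∧
      (C a * X 0 + C b * X 1 + C c : MvPolynomial (Fin 2) ℂ) ∣
        (C a * (X 0 + (X 1)^2 - (X 0)^2 * X 1)
          - C b * (X 0 * (X 0 + (X 1)^2))) := by
  rintro ⟨a, b, c, hab, hdvd⟩
  have vanish_on_line :
      ∀ x y : ℂ, a * x + b * y + c = 0 → a * omega4Q x y - b * omega4P x y = 0 := by
    intro x y hxy
    have := map_dvd (eval ![x, y]) hdvd
    simpa [omega4P, omega4Q, hxy] using this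
  by_cases hb : b = 0
  · subst hb
    have ha : a ≠ 0 := by rintro rfl; exact hab rfl
    obtain ⟨y, hy⟩ := exists_omega4Q_ne_zero (-c / a)
    exact hy <| by simpa [ha] using vanish_on_line (-c / a) y (by field_simp; ring)
  · obtain ⟨x, hx⟩ := exists_omega4P_add_mul_omega4Q_ne_zero (-a / b) (-c / b)
    set y := -a / b * x + -c / b with hy
    have hline := vanish_on_line x y (by rw [hy]; field_simp; ring)
    have hba : b * (-a / b) = -a := mul_div_cancel₀ _ hb
    refine hx (mul_left_cancel₀ hb ?_)
    linear_combination -hline + omega4Q x y * hba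
end

section
/- For every β ∈ ℂ, the birational map φ(x,y) = (x/(1+βx), y/(1+βx)) preserves the foliation F₁ defined by ω₁ = x²dx + y²(x dy − y dx): on the open set 1+βx ≠ 0, φ*ω₁ = (1+βx)^{-4}·ω₁. -/
/-!
Write `u = 1 + βx` and `ω₁ = x² dx + y² (x dy − y dx)`. For any function `u`, pulling back along
`(x, y) ↦ (x, y)/u` multiplies `x dy − y dx` by `u⁻²` (the `du` terms cancel), and for
`u = 1 + βx` also `d(x/u) = dx/u²`. With the factors `u⁻²` from `x²` and `y²`, both summands of
`ω₁` pull back to themselves times `u⁻⁴`.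
-/

section

variable {𝕜 : Type*} [NontriviallyNormedField 𝕜]

lemma hasDerivAt_one_add_mul (β x : 𝕜) : HasDerivAt (fun t => 1 + β * t) β x := by
  simpa using ((hasDerivAt_id x).const_mul β).const_add 1

lemma deriv_id_div_one_add_mul {β x : 𝕜} (h : 1 + β * x ≠ 0) :
    deriv (fun t => t / (1 + β * t)) x = ((1 + β * x) ^ 2)⁻¹ := by
  refine ((hasDerivAt_id' x).div (hasDerivAt_one_add_mul β x) h).deriv.trans ?_
  field_simp
  ring

lemma deriv_const_div_one_add_mul {β x : 𝕜} (y : 𝕜) (h : 1 + β * x ≠ 0) :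
    deriv (fun t => y / (1 + β * t)) x = -(y * β) / (1 + β * x) ^ 2 := by
  refine ((hasDerivAt_const x y).div (hasDerivAt_one_add_mul β x) h).deriv.trans ?_
  ring

end

/-- For β ∈ ℂ, the map φ(x,y) = (x/(1+βx), y/(1+βx)) preserves the foliation of
ω₁ = (x²−y³)dx + xy²dy : on 1+βx ≠ 0, φ*ω₁ = (1+βx)⁻⁴·ω₁, componentwise. -/
theorem isotropy_omega1_birational (β : ℂ) :
    ∀ x y : ℂ, 1 + β*x ≠ 0 →
      (((x/(1+β*x))^2 - (y/(1+β*x))^3) * deriv (fun x' : ℂ => x'/(1+β*x')) x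
          + ((x/(1+β*x)) * (y/(1+β*x))^2) * deriv (fun x' : ℂ => y/(1+β*x')) x
        = (1+β*x)^(-4 : ℤ) * (x^2 - y^3)) ∧
      (((x/(1+β*x))^2 - (y/(1+β*x))^3) * deriv (fun y' : ℂ => x/(1+β*x)) y
          + ((x/(1+β*x)) * (y/(1+β*x))^2) * deriv (fun y' : ℂ => y'/(1+β*x)) y
        = (1+β*x)^(-4 : ℤ) * (x * y^2)) := by
  intro x y h
  rw [deriv_id_div_one_add_mul h, deriv_const_div_one_add_mul y h, deriv_const,
    deriv_div_const, deriv_id'', zpow_neg, zpow_ofNat]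
  have h' : 1 + x * β ≠ 0 := by rwa [mul_comm]
  constructor <;> field_simp <;> ring
end
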